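/- arXiv:2407.03507 — 2 statements merged into one kernel-verified Lean document; each statement's English description precedes it below -/
import Mathlib

section
/- Let μ, η, ρ > 0 and let real sequences (γ_k), (α_k), (β_k), (a_k), (b_k) with α_k ∈ (0,1), b_k, a_k, γ_k > 0 satisfy the relations γ_k = (1/(2ρ))·(1 + β_k(1−α_k)/α_k), α_k = γ_k β_k b_{k+1}² η/(γ_k β_k b_{k+1}² η + 2a_k²), β_k = 1 − γ_k μ η, a_{k+1} = γ_k √(ηρ) b_{k+1}, and b_{k+1} = b_k/√(β_k). Then for every k ≥ 1 the recursion γ_k² − γ_k·(1/(2ρ) − μη γ_{k−1}²) = γ_{k−1}² holds. -/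
/-!
Substituting `b_{k+1}² = b_k² / β_k` and `a_k² = γ_{k-1}² η ρ b_k²` into the definition of `α_k`,
the odds `(1 - α_k) / α_k` reduce to `2ρ γ_{k-1}² / γ_k`. The defining relation of `γ_k` then reads
`2ρ γ_k² = γ_k + 2ρ β_k γ_{k-1}²`, and `β_k = 1 - μη γ_k` turns this into the recursion.
-/

lemma Real.pos_of_div_sqrt_pos {x y : ℝ} (h : 0 < x / √y) : 0 < y := by
  have hsqrt : √y ≠ 0 := fun h0 => by simp [h0] at h
  exact Real.sqrt_pos.mp (lt_of_le_of_ne (Real.sqrt_nonneg y) (Ne.symm hsqrt))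

lemma one_sub_div_add_div_div_add {a b : ℝ} (h : a + b ≠ 0) :
    (1 - a / (a + b)) / (a / (a + b)) = b / a := by
  rw [one_sub_div h, add_sub_cancel_left, div_div_div_cancel_right₀ h]

lemma sq_sub_mul_eq_of_odds {ρ μ η β γ γ' t : ℝ} (hρ : ρ ≠ 0) (hγ : γ ≠ 0)
    (ht : t = 2 * ρ * γ' ^ 2 / γ) (hγt : γ = 1 / (2 * ρ) * (1 + β * t))
    (hβ : β = 1 - γ * μ * η) :
    γ ^ 2 - γ * (1 / (2 * ρ) - μ * η * γ' ^ 2) = γ' ^ 2 := by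
  subst ht hβ
  field_simp at hγt ⊢
  linear_combination hγt

theorem stmt11_general (μ η ρ : ℝ) (hη : 0 < η) (hρ : 0 < ρ)
    (γ α βs a b : ℕ → ℝ)
    (hbpos : ∀ k, 0 < b k) (hγpos : ∀ k, 0 < γ k)
    (h1 : ∀ k, γ k = 1 / (2 * ρ) * (1 + βs k * (1 - α k) / α k))
    (h2 : ∀ k, α k =
      γ k * βs k * (b (k + 1)) ^ 2 * η / (γ k * βs k * (b (k + 1)) ^ 2 * η + 2 * (a k) ^ 2))
    (h3 : ∀ k, βs k = 1 - γ k * μ * η)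
    (h4 : ∀ k, a (k + 1) = γ k * Real.sqrt (η * ρ) * b (k + 1))
    (h5 : ∀ k, b (k + 1) = b k / Real.sqrt (βs k)) :
    ∀ k : ℕ, 1 ≤ k →
      γ k ^ 2 - γ k * (1 / (2 * ρ) - μ * η * γ (k - 1) ^ 2) = γ (k - 1) ^ 2 := by
  intro k hk
  obtain ⟨m, rfl⟩ := Nat.exists_eq_add_of_le' hk
  rw [Nat.add_sub_cancel]
  have hβ : 0 < βs (m + 1) := Real.pos_of_div_sqrt_pos (h5 (m + 1) ▸ hbpos (m + 2))
  have hb2 : b (m + 2) ^ 2 = b (m + 1) ^ 2 / βs (m + 1) := by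
    rw [h5, div_pow, Real.sq_sqrt hβ.le]
  have ha2 : a (m + 1) ^ 2 = γ m ^ 2 * (η * ρ) * b (m + 1) ^ 2 := by
    rw [h4, mul_pow, mul_pow, Real.sq_sqrt (by positivity)]
  have hγ := hγpos (m + 1)
  have hb := hbpos (m + 1)
  have hb' := hbpos (m + 2)
  have hodds : (1 - α (m + 1)) / α (m + 1) = 2 * ρ * γ m ^ 2 / γ (m + 1) := by
    rw [h2, one_sub_div_add_div_div_add (by positivity), hb2, ha2]
    field_simp
  refine sq_sub_mul_eq_of_odds hρ.ne' hγ.ne' hodds ?_ (h3 _)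
  rw [h1, mul_div_assoc]

/-- Given positive `μ, η, ρ` and sequences `(γ_k), (α_k), (β_k), (a_k), (b_k)`
with `α_k ∈ (0,1)` and `b_k, a_k, γ_k > 0` satisfying the five parameter relations, the
recursion `γ_k² − γ_k·(1/(2ρ) − μη γ_{k−1}²) = γ_{k−1}²` holds for every `k ≥ 1`. -/
theorem stmt11 (μ η ρ : ℝ) (hμ : 0 < μ) (hη : 0 < η) (hρ : 0 < ρ)
    (γ α βs a b : ℕ → ℝ)
    (hα01 : ∀ k, α k ∈ Set.Ioo (0 : ℝ) 1)
    (hbpos : ∀ k, 0 < b k) (hapos : ∀ k, 0 < a k) (hγpos : ∀ k, 0 < γ k)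
    (h1 : ∀ k, γ k = 1 / (2 * ρ) * (1 + βs k * (1 - α k) / α k))
    (h2 : ∀ k, α k =
      γ k * βs k * (b (k + 1)) ^ 2 * η / (γ k * βs k * (b (k + 1)) ^ 2 * η + 2 * (a k) ^ 2))
    (h3 : ∀ k, βs k = 1 - γ k * μ * η)
    (h4 : ∀ k, a (k + 1) = γ k * Real.sqrt (η * ρ) * b (k + 1))
    (h5 : ∀ k, b (k + 1) = b k / Real.sqrt (βs k)) :
    ∀ k : ℕ, 1 ≤ k →
      γ k ^ 2 - γ k * (1 / (2 * ρ) - μ * η * γ (k - 1) ^ 2) = γ (k - 1) ^ 2 :=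
  stmt11_general μ η ρ hη hρ γ α βs a b hbpos hγpos h1 h2 h3 h4 h5
end

section
/- Let e be uniformly distributed on the unit Euclidean sphere S^{d−1} ⊂ ℝ^d, let r be a random variable with values in [−1,1] independent of e, let K: [−1,1] → ℝ be measurable with E[rK(r)] = 1 and E[r^j K(r)] = 0 for j = 2, …, l, and let f: ℝ^d → ℝ be l times differentiable at x. Then for every h > 0: E[(d/h)·(⟨∇f(x), h r e⟩ + Σ_{2 ≤ |n| ≤ l} ((r h)^{|n|}/n!) D^n f(x) e^n)·K(r)·e] = ∇f(x), where the sum is over multi-indices n ∈ ℕ^d with 2 ≤ |n| ≤ l and D^n f(x) e^n denotes the corresponding partial derivative applied to powers of the coordinates of e. In particular this uses E[e eᵀ] = (1/d)·I_{d×d}. -/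
open MeasureTheory ProbabilityTheory
open scoped RealInnerProductSpace

/-- The uniform (normalized surface) probability measure on the unit Euclidean sphere
`S^{d−1} ⊂ ℝ^d`, realized as the normalized `(d−1)`-dimensional Hausdorff measure
restricted to the sphere. -/
noncomputable def sphereUniform (d : ℕ) : Measure (EuclideanSpace ℝ (Fin d)) :=
  (μH[(d : ℝ) - 1] (Metric.sphere (0 : EuclideanSpace ℝ (Fin d)) 1))⁻¹ •
    (μH[(d : ℝ) - 1] : Measure (EuclideanSpace ℝ (Fin d))).restrict
      (Metric.sphere (0 : EuclideanSpace ℝ (Fin d)) 1)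

/-- The partial derivative `∂f/∂x_i` of `f : ℝ^d → ℝ`. -/
noncomputable def pderiv' {d : ℕ} (i : Fin d) (f : EuclideanSpace ℝ (Fin d) → ℝ) :
    EuclideanSpace ℝ (Fin d) → ℝ :=
  fun x => fderiv ℝ f x (EuclideanSpace.single i 1)

/-- The iterated partial derivative `D^n f = ∂^{|n|} f/∂x₁^{n₁}⋯∂x_d^{n_d}` attached to a
multi-index `n : Fin d → ℕ`. -/
noncomputable def Dmulti {d : ℕ} (n : Fin d → ℕ) (f : EuclideanSpace ℝ (Fin d) → ℝ) :
    EuclideanSpace ℝ (Fin d) → ℝ :=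
  (List.finRange d).foldr (fun i g => (pderiv' i)^[n i] g) f

/-!
By independence, every term of the integrand factors as `E[r ^ j K(r)] • E[T_j(e) • e]`, where
`T_j` is the homogeneous degree-`j` Taylor term of `f` at `x`, so the moment conditions on `K`
kill all terms with `j ≥ 2` and leave `d • E[⟪∇f(x), e⟫ • e]`. The uniform measure on the sphere
is invariant under sign flips and permutations of the coordinates, hence `E[e eᵀ]` is a multiple
of the identity, and its trace `E‖e‖² = 1` makes it `(1/d) I`.
-/

namespace EuclideanSpace

variable {d : ℕ}

noncomputable def negCoord (j : Fin d) :
    EuclideanSpace ℝ (Fin d) ≃ₗᵢ[ℝ] EuclideanSpace ℝ (Fin d) :=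
  LinearIsometryEquiv.piLpCongrRight 2
    (fun k => if k = j then LinearIsometryEquiv.neg ℝ else LinearIsometryEquiv.refl ℝ ℝ)

lemma negCoord_apply_self (j : Fin d) (y : EuclideanSpace ℝ (Fin d)) :
    negCoord j y j = -y j := by
  simp [negCoord, LinearIsometryEquiv.piLpCongrRight_apply]

lemma negCoord_apply_of_ne {k j : Fin d} (hk : k ≠ j) (y : EuclideanSpace ℝ (Fin d)) :
    negCoord j y k = y k := by
  simp [negCoord, LinearIsometryEquiv.piLpCongrRight_apply, hk]

lemma piLpCongrLeft_swap_apply_left (i j : Fin d) (y : EuclideanSpace ℝ (Fin d)) :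
    LinearIsometryEquiv.piLpCongrLeft 2 ℝ ℝ (Equiv.swap i j) y i = y j := by
  simp [LinearIsometryEquiv.piLpCongrLeft_apply, Equiv.piCongrLeft'_apply, Equiv.symm_swap]

end EuclideanSpace

section SphereUniform

variable {d : ℕ}

lemma sphereUniform_map_linearIsometryEquiv
    (T : EuclideanSpace ℝ (Fin d) ≃ₗᵢ[ℝ] EuclideanSpace ℝ (Fin d)) :
    (sphereUniform d).map T = sphereUniform d := by
  have hT : T ⁻¹' Metric.sphere 0 1 = Metric.sphere 0 1 := by
    ext y
    simp
  rw [sphereUniform, Measure.map_smul, ← hT, ← Measure.restrict_map T.continuous.measurable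
    Metric.isClosed_sphere.measurableSet, hT]
  congr 2
  exact T.toIsometryEquiv.map_hausdorffMeasure _

lemma ae_mem_sphere_sphereUniform : ∀ᵐ y ∂(sphereUniform d), y ∈ Metric.sphere 0 1 :=
  Measure.ae_smul_measure (ae_restrict_mem Metric.isClosed_sphere.measurableSet) _

lemma integral_comp_linearIsometryEquiv_sphereUniform {F : Type*} [NormedAddCommGroup F]
    [NormedSpace ℝ F] (T : EuclideanSpace ℝ (Fin d) ≃ₗᵢ[ℝ] EuclideanSpace ℝ (Fin d))
    (g : EuclideanSpace ℝ (Fin d) → F) :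
    ∫ y, g (T y) ∂(sphereUniform d) = ∫ y, g y ∂(sphereUniform d) :=
  MeasurePreserving.integral_comp' (f := T.toHomeomorph.toMeasurableEquiv)
    ⟨T.continuous.measurable, sphereUniform_map_linearIsometryEquiv T⟩ g

lemma Continuous.integrable_sphereUniform [IsFiniteMeasure (sphereUniform d)] {F : Type*}
    [NormedAddCommGroup F] {g : EuclideanSpace ℝ (Fin d) → F} (hg : Continuous g) :
    Integrable g (sphereUniform d) := by
  rw [← Measure.restrict_eq_self_of_ae_mem ae_mem_sphere_sphereUniform]
  exact hg.continuousOn.integrableOn_compact (isCompact_sphere 0 1)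

lemma integral_coord_mul_coord_sphereUniform_of_ne {i j : Fin d} (hij : i ≠ j) :
    ∫ y, y i * y j ∂(sphereUniform d) = 0 := by
  have h := integral_comp_linearIsometryEquiv_sphereUniform (EuclideanSpace.negCoord j)
    fun y => y i * y j
  simp only [EuclideanSpace.negCoord_apply_self, EuclideanSpace.negCoord_apply_of_ne hij,
    mul_neg, integral_neg] at h
  linarith

lemma integral_coord_mul_self_sphereUniform [IsProbabilityMeasure (sphereUniform d)] (i : Fin d) :
    ∫ y, y i * y i ∂(sphereUniform d) = (d : ℝ)⁻¹ := by
  have hswap (k : Fin d) :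
      ∫ y, y k * y k ∂(sphereUniform d) = ∫ y, y i * y i ∂(sphereUniform d) := by
    simpa only [EuclideanSpace.piLpCongrLeft_swap_apply_left] using
      integral_comp_linearIsometryEquiv_sphereUniform
        (LinearIsometryEquiv.piLpCongrLeft 2 ℝ ℝ (Equiv.swap i k)) fun y => y i * y i
  have hsum : ∑ k : Fin d, ∫ y, y k * y k ∂(sphereUniform d) = 1 := by
    rw [← integral_finsetSum _ fun k _ => (by fun_prop : Continuous fun y :
      EuclideanSpace ℝ (Fin d) => y k * y k).integrable_sphereUniform]
    calc ∫ y, ∑ k, y k * y k ∂(sphereUniform d) = ∫ _, (1 : ℝ) ∂(sphereUniform d) := by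
          refine integral_congr_ae ?_
          filter_upwards [ae_mem_sphere_sphereUniform] with y hy
          rw [mem_sphere_zero_iff_norm] at hy
          simpa [← sq, hy] using (EuclideanSpace.norm_sq_eq y).symm
      _ = 1 := by simp
  simp only [hswap, Finset.sum_const, Finset.card_univ, Fintype.card_fin, nsmul_eq_mul] at hsum
  exact eq_inv_of_mul_eq_one_right hsum

lemma integral_inner_smul_sphereUniform [IsProbabilityMeasure (sphereUniform d)]
    (v : EuclideanSpace ℝ (Fin d)) :
    ∫ y, ⟪v, y⟫ • y ∂(sphereUniform d) = (d : ℝ)⁻¹ • v := by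
  have hmoment (i k : Fin d) :
      ∫ y, y i * y k ∂(sphereUniform d) = if i = k then (d : ℝ)⁻¹ else 0 := by
    split_ifs with hik
    · rw [hik, integral_coord_mul_self_sphereUniform]
    · exact integral_coord_mul_coord_sphereUniform_of_ne hik
  ext i
  rw [eval_integral_piLp fun k => (by fun_prop : Continuous fun y :
      EuclideanSpace ℝ (Fin d) => (⟪v, y⟫ • y) k).integrable_sphereUniform]
  have hexpand (y : EuclideanSpace ℝ (Fin d)) : (⟪v, y⟫ • y) i = ∑ k, v k * (y i * y k) := by
    simp only [PiLp.smul_apply, PiLp.inner_apply, smul_eq_mul, Finset.sum_mul]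
    exact Finset.sum_congr rfl fun k _ => by simp only [RCLike.inner_apply, conj_trivial]; ring
  simp_rw [hexpand]
  rw [integral_finsetSum _ fun k _ => ((by fun_prop : Continuous fun y :
      EuclideanSpace ℝ (Fin d) => y i * y k).integrable_sphereUniform).const_mul _]
  simp [integral_const_mul, hmoment, mul_comm]

end SphereUniform

namespace ProbabilityTheory

variable {Ω β : Type*} {mΩ : MeasurableSpace Ω} {μ : Measure Ω} [MeasurableSpace β] {d : ℕ}
  {e : Ω → EuclideanSpace ℝ (Fin d)} {r : Ω → β}

lemma integrable_comp_of_map_eq_sphereUniform [IsFiniteMeasure μ] (he : Measurable e)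
    (hedist : μ.map e = sphereUniform d) {F : Type*} [NormedAddCommGroup F]
    {g : EuclideanSpace ℝ (Fin d) → F} (hg : Continuous g) :
    Integrable (fun ω => g (e ω)) μ := by
  have : IsFiniteMeasure (sphereUniform d) := hedist ▸ inferInstance
  have hint := hg.integrable_sphereUniform
  rw [← hedist] at hint
  exact (integrable_map_measure hint.aestronglyMeasurable he.aemeasurable).1 hint

lemma IndepFun.integrable_comp_smul_of_map_eq_sphereUniform [IsFiniteMeasure μ]
    (hindep : IndepFun r e μ) (he : Measurable e) (hedist : μ.map e = sphereUniform d) {φ : β → ℝ}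
    (hφm : Measurable φ) (hφ : Integrable (fun ω => φ (r ω)) μ) {F : Type*}
    [NormedAddCommGroup F] [NormedSpace ℝ F] [MeasurableSpace F] [BorelSpace F]
    {g : EuclideanSpace ℝ (Fin d) → F} (hg : Continuous g) :
    Integrable (fun ω => φ (r ω) • g (e ω)) μ :=
  (hindep.comp hφm hg.measurable).integrable_smul hφ
    (integrable_comp_of_map_eq_sphereUniform he hedist hg)

lemma IndepFun.integral_comp_smul_of_map_eq_sphereUniform (hindep : IndepFun r e μ)
    (hr : Measurable r) (he : Measurable e) (hedist : μ.map e = sphereUniform d) {φ : β → ℝ}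
    (hφ : Measurable φ) {F : Type*} [NormedAddCommGroup F] [NormedSpace ℝ F] [CompleteSpace F]
    {g : EuclideanSpace ℝ (Fin d) → F} (hg : Continuous g) :
    ∫ ω, φ (r ω) • g (e ω) ∂μ = (∫ ω, φ (r ω) ∂μ) • ∫ y, g y ∂(sphereUniform d) := by
  rw [hindep.integral_fun_comp_smul_comp hr.aemeasurable he.aemeasurable
    hφ.aestronglyMeasurable hg.aestronglyMeasurable, ← hedist,
    integral_map he.aemeasurable hg.aestronglyMeasurable]

end ProbabilityTheory

lemma integrable_pow_mul_comp_of_mem_Icc {Ω : Type*} {mΩ : MeasurableSpace Ω} {μ : Measure Ω}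
    {r : Ω → ℝ} (hr : Measurable r) (hrval : ∀ ω, r ω ∈ Set.Icc (-1 : ℝ) 1) {K : ℝ → ℝ}
    (hK : Measurable K) (hKint : Integrable (fun ω => K (r ω)) μ) (j : ℕ) :
    Integrable (fun ω => r ω ^ j * K (r ω)) μ := by
  refine hKint.norm.mono' (by fun_prop) (.of_forall fun ω => ?_)
  rw [norm_mul, norm_pow]
  exact mul_le_of_le_one_left (norm_nonneg _)
    (pow_le_one₀ (norm_nonneg _) (abs_le.2 (hrval ω)))

noncomputable def taylorTerm {d : ℕ} (f : EuclideanSpace ℝ (Fin d) → ℝ)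
    (x : EuclideanSpace ℝ (Fin d)) (j : ℕ) (y : EuclideanSpace ℝ (Fin d)) : ℝ :=
  ∑ n ∈ Finset.Nat.antidiagonalTuple d j, Dmulti n f x / (∏ i, ((n i).factorial : ℝ)) *
    ∏ i, y i ^ n i

lemma continuous_taylorTerm {d : ℕ} (f : EuclideanSpace ℝ (Fin d) → ℝ)
    (x : EuclideanSpace ℝ (Fin d)) (j : ℕ) : Continuous (taylorTerm f x j) := by
  unfold taylorTerm
  fun_prop

lemma smul_taylor_expansion_eq {d : ℕ} (l : ℕ) (f : EuclideanSpace ℝ (Fin d) → ℝ)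
    (v x y : EuclideanSpace ℝ (Fin d)) {h : ℝ} (hh : h ≠ 0) (t k : ℝ) :
    (((d : ℝ) / h) *
        ((⟪v, (h * t) • y⟫ +
          ∑ j ∈ Finset.Icc 2 l, ∑ n ∈ Finset.Nat.antidiagonalTuple d j,
            ((t * h) ^ j / ∏ i, ((n i).factorial : ℝ)) * Dmulti n f x *
              ∏ i, (y i) ^ (n i)) * k)) • y
      = (d * (t * k)) • (⟪v, y⟫ • y)
        + ∑ j ∈ Finset.Icc 2 l, (d / h * h ^ j * (t ^ j * k)) • (taylorTerm f x j y • y) := by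
  simp only [smul_smul, ← Finset.sum_smul, ← add_smul, real_inner_smul_right]
  congr 1
  simp only [taylorTerm, Finset.mul_sum, Finset.sum_mul, add_mul, mul_add]
  congr 1
  · field_simp
  · refine Finset.sum_congr rfl fun j _ => Finset.sum_congr rfl fun n _ => ?_
    field_simp
    ring

theorem stmt16_general {d : ℕ} (l : ℕ)
    {Ω : Type} [MeasureSpace Ω] [IsProbabilityMeasure (ℙ : Measure Ω)]
    (e : Ω → EuclideanSpace ℝ (Fin d)) (r : Ω → ℝ)
    (he : Measurable e) (hr : Measurable r)
    (hedist : Measure.map e ℙ = sphereUniform d)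
    (hrval : ∀ ω, r ω ∈ Set.Icc (-1 : ℝ) 1)
    (hindep : IndepFun e r ℙ)
    (K : ℝ → ℝ) (hK : Measurable K)
    (hKint : Integrable (fun ω => K (r ω)) ℙ)
    (hK1 : (∫ ω, r ω * K (r ω) ∂ℙ) = 1)
    (hKj : ∀ j, 2 ≤ j → j ≤ l → (∫ ω, (r ω) ^ j * K (r ω) ∂ℙ) = 0)
    (f : EuclideanSpace ℝ (Fin d) → ℝ)
    (f' : EuclideanSpace ℝ (Fin d) → EuclideanSpace ℝ (Fin d))
    (x : EuclideanSpace ℝ (Fin d))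
    (h : ℝ) (hh : 0 < h) :
    (∫ ω, (((d : ℝ) / h) *
        ((⟪f' x, (h * r ω) • e ω⟫ +
          ∑ j ∈ Finset.Icc 2 l, ∑ n ∈ Finset.Nat.antidiagonalTuple d j,
            ((r ω * h) ^ j / ∏ i, ((n i).factorial : ℝ)) * Dmulti n f x *
              ∏ i, (e ω i) ^ (n i)) * K (r ω))) • e ω ∂ℙ) = f' x := by
  -- `sphereUniform d` is normalized by `μH(S)`, whose finiteness and positivity come from `hedist`.
  have : IsProbabilityMeasure (sphereUniform d) :=
    hedist ▸ Measure.isProbabilityMeasure_map he.aemeasurable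
  have hterm {φ : ℝ → ℝ} (hφ : Measurable φ) (hφint : Integrable (fun ω => φ (r ω)) ℙ)
      {g : EuclideanSpace ℝ (Fin d) → EuclideanSpace ℝ (Fin d)} (hg : Continuous g) :
      Integrable (fun ω => φ (r ω) • g (e ω)) ℙ ∧
        ∫ ω, φ (r ω) • g (e ω) ∂ℙ = (∫ ω, φ (r ω) ∂ℙ) • ∫ y, g y ∂(sphereUniform d) :=
    ⟨hindep.symm.integrable_comp_smul_of_map_eq_sphereUniform he hedist hφ hφint hg,
      hindep.symm.integral_comp_smul_of_map_eq_sphereUniform hr he hedist hφ hg⟩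
  have hKint_pow (j : ℕ) := integrable_pow_mul_comp_of_mem_Icc hr hrval hK hKint j
  have hlead := hterm (φ := fun t => d * (t * K t)) (by fun_prop)
    (by simpa using (hKint_pow 1).const_mul d) (g := fun y => ⟪f' x, y⟫ • y) (by fun_prop)
  have hhigher (j : ℕ) := hterm (φ := fun t => d / h * h ^ j * (t ^ j * K t)) (by fun_prop)
    ((hKint_pow j).const_mul _) (g := fun y => taylorTerm f x j y • y)
    ((continuous_taylorTerm f x j).smul continuous_id)
  rw [integral_congr_ae (.of_forall fun ω =>
      smul_taylor_expansion_eq l f (f' x) x (e ω) hh.ne' _ _),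
    integral_add hlead.1 (integrable_finsetSum _ fun j _ => (hhigher j).1),
    integral_finsetSum _ fun j _ => (hhigher j).1,
    Finset.sum_eq_zero fun j hj => by
      rw [(hhigher j).2, integral_const_mul, hKj j (Finset.mem_Icc.1 hj).1 (Finset.mem_Icc.1 hj).2,
        mul_zero, zero_smul],
    add_zero, hlead.2, integral_const_mul, hK1, integral_inner_smul_sphereUniform, mul_one]
  -- `(0 : ℝ)⁻¹ = 0`, but for `d = 0` the space is trivial.
  obtain rfl | hd := d.eq_zero_or_pos
  · exact Subsingleton.elim _ _
  · exact smul_inv_smul₀ (Nat.cast_ne_zero.2 hd.ne') _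

/-- a kernel property. If `e` is uniform on the unit sphere, `r ∈ [−1,1]` is
independent of `e`, `K` satisfies `E[rK(r)] = 1` and `E[r^j K(r)] = 0` for `j = 2,…,l`, and
`f` is `l` times differentiable at `x`, then for every `h > 0`,
`E[(d/h)·(⟨∇f(x), h r e⟩ + Σ_{2 ≤ |n| ≤ l} ((r h)^{|n|}/n!) D^n f(x) e^n)·K(r)·e] = ∇f(x)`,
where the inner sum ranges over multi-indices `n` with `|n| = j`. -/
theorem stmt16 {d : ℕ} (hd : 0 < d) (l : ℕ)
    {Ω : Type} [MeasureSpace Ω] [IsProbabilityMeasure (ℙ : Measure Ω)]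
    (e : Ω → EuclideanSpace ℝ (Fin d)) (r : Ω → ℝ)
    (he : Measurable e) (hr : Measurable r)
    (hedist : Measure.map e ℙ = sphereUniform d)
    (hrval : ∀ ω, r ω ∈ Set.Icc (-1 : ℝ) 1)
    (hindep : IndepFun e r ℙ)
    (K : ℝ → ℝ) (hK : Measurable K)
    (hKint : Integrable (fun ω => K (r ω)) ℙ)
    (hK1 : (∫ ω, r ω * K (r ω) ∂ℙ) = 1)
    (hKj : ∀ j, 2 ≤ j → j ≤ l → (∫ ω, (r ω) ^ j * K (r ω) ∂ℙ) = 0)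
    (f : EuclideanSpace ℝ (Fin d) → ℝ)
    (f' : EuclideanSpace ℝ (Fin d) → EuclideanSpace ℝ (Fin d))
    (x : EuclideanSpace ℝ (Fin d))
    (hf : ContDiffAt ℝ l f x) (hgrad : HasGradientAt f (f' x) x)
    (h : ℝ) (hh : 0 < h) :
    (∫ ω, (((d : ℝ) / h) *
        ((⟪f' x, (h * r ω) • e ω⟫ +
          ∑ j ∈ Finset.Icc 2 l, ∑ n ∈ Finset.Nat.antidiagonalTuple d j,
            ((r ω * h) ^ j / ∏ i, ((n i).factorial : ℝ)) * Dmulti n f x *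
              ∏ i, (e ω i) ^ (n i)) * K (r ω))) • e ω ∂ℙ) = f' x :=
  stmt16_general l e r he hr hedist hrval hindep K hK hKint hK1 hKj f f' x h hh
end
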